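/- arXiv:1301.5192 — 4 statements merged into one kernel-verified Lean document; each statement's English description precedes it below -/
import Mathlib

section
/- If Ai satisfies the Airy equation and μ is a zero of Ai with suitable decay of Ai at +∞, then ∫_μ^∞ Ai(x)² dx = Ai'(μ)². -/
open MeasureTheory Filter

/-! For a solution of `f'' = x f` the energy `(f')² - x f²` has derivative `-f²`, so with decay at
`+∞` the fundamental theorem of calculus gives `∫_a^∞ f² = f'(a)² - a f(a)²`; at a zero of `f` the
second term vanishes. -/

theorem hasDerivAt_sq_sub_mul_sq_of_airy {f g : ℝ → ℝ} {x : ℝ}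
    (hf : HasDerivAt f (g x) x) (hg : HasDerivAt g (x * f x) x) :
    HasDerivAt (fun x => g x ^ 2 - x * f x ^ 2) (-(f x ^ 2)) x := by
  have hg_sq : HasDerivAt (fun x => g x ^ 2) (2 * g x * (x * f x)) x :=
    (hg.pow 2).congr_deriv (by ring)
  have hmul_sq : HasDerivAt (fun x => x * f x ^ 2) (1 * f x ^ 2 + x * (2 * f x * g x)) x :=
    (hasDerivAt_id x).mul ((hf.pow 2).congr_deriv (by ring))
  exact (hg_sq.sub hmul_sq).congr_deriv (by ring)

theorem integral_Ioi_sq_of_airy {f g : ℝ → ℝ} {a : ℝ}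
    (hf : ∀ x ∈ Set.Ici a, HasDerivAt f (g x) x)
    (hg : ∀ x ∈ Set.Ici a, HasDerivAt g (x * f x) x)
    (hf_decay : Tendsto (fun x => x * f x ^ 2) atTop (nhds 0))
    (hg_decay : Tendsto (fun x => g x ^ 2) atTop (nhds 0))
    (hint : IntegrableOn (fun x => f x ^ 2) (Set.Ioi a)) :
    ∫ x in Set.Ioi a, f x ^ 2 = g a ^ 2 - a * f a ^ 2 := by
  have hftc := integral_Ioi_of_hasDerivAt_of_tendsto'
    (fun x hx => hasDerivAt_sq_sub_mul_sq_of_airy (hf x hx) (hg x hx)) hint.neg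
    (by simpa using hg_decay.sub hf_decay)
  rw [integral_neg] at hftc
  linarith

/-- If `Ai` satisfies the Airy equation and `μ` is a zero of `Ai`, with suitable decay
of `Ai` at `+∞`, then `∫_μ^∞ Ai² = Ai'(μ)²`. -/
theorem airy_integral_at_zero (Ai : ℝ → ℝ)
    (hAi : ∀ x, HasDerivAt Ai (deriv Ai x) x)
    (hAi'' : ∀ x, HasDerivAt (deriv Ai) (x * Ai x) x)
    (μ : ℝ) (hμ : Ai μ = 0)
    (hdecay1 : Tendsto (fun x => x * Ai x ^ 2) atTop (nhds 0))
    (hdecay2 : Tendsto (fun x => (deriv Ai x) ^ 2) atTop (nhds 0))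
    (hint : IntegrableOn (fun x => Ai x ^ 2) (Set.Ici μ)) :
    ∫ x in Set.Ioi μ, Ai x ^ 2 = (deriv Ai μ) ^ 2 := by
  have hint' : IntegrableOn (fun x => Ai x ^ 2) (Set.Ioi μ) :=
    hint.mono_set Set.Ioi_subset_Ici_self
  rw [integral_Ioi_sq_of_airy (fun x _ => hAi x) (fun x _ => hAi'' x) hdecay1 hdecay2 hint', hμ]
  ring
end

section
/- For every θ with 0 < |θ| < 3π/4, the quantity m_θ = sqrt(1 + sin²(2θ/3)/sin²θ − 2·cos(θ/3)·sin(2θ/3)/sin θ) is well-defined and strictly positive, i.e., the expression under the square root is strictly positive. -/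
/-!
With `a = sin (2θ/3) / sin θ` the expression is `1 + a² - 2a cos (θ/3)`, which by the law of
cosines is `(a - cos (θ/3))² + sin² (θ/3)`. It is positive because `θ/3` lies in `(-π, π)` and is
nonzero, so `sin (θ/3) ≠ 0`.
-/

open Real

theorem one_add_sq_sub_two_mul_mul_cos_pos {φ : ℝ} (a : ℝ) (h : sin φ ≠ 0) :
    0 < 1 + a ^ 2 - 2 * a * cos φ :=
  calc 0 < (a - cos φ) ^ 2 + sin φ ^ 2 := by positivity
    _ = 1 + a ^ 2 - 2 * a * cos φ := by linear_combination sin_sq_add_cos_sq φ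

/-- For `0 < |θ| < 3π/4`, the expression under the square root defining `m_θ`
is strictly positive. -/
theorem m_theta_pos (θ : ℝ) (h1 : 0 < |θ|) (h2 : |θ| < 3 * π / 4) :
    0 < 1 + sin (2 * θ / 3) ^ 2 / sin θ ^ 2 -
        2 * cos (θ / 3) * sin (2 * θ / 3) / sin θ := by
  obtain ⟨hlo, hhi⟩ := abs_lt.mp h2
  have hsin : sin (θ / 3) ≠ 0 := by
    rw [Ne, sin_eq_zero_iff_of_lt_of_lt (by linarith [pi_pos]) (by linarith [pi_pos])]
    exact div_ne_zero (abs_pos.mp h1) three_ne_zero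
  convert one_add_sq_sub_two_mul_mul_cos_pos (sin (2 * θ / 3) / sin θ) hsin using 1
  ring
end

section
/- Define f(z) = log(z + sqrt(z² − 1)) − z·sqrt(z² − 1) for complex z (with principal branches). For 0 < θ < π, the real number c(θ) := 2·Re f(e^{iθ/4}/sqrt(2·cos(θ/2))) is strictly positive. -/
open Real

/-- `f(z) = log(z + √(z²−1)) − z√(z²−1)` (principal branches). -/
noncomputable def daviesKuijlaarsF (z : ℂ) : ℂ :=
  Complex.log (z + (z ^ 2 - 1) ^ ((1 : ℂ) / 2)) - z * (z ^ 2 - 1) ^ ((1 : ℂ) / 2)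

/-!
The point `z = e^{iθ/4} / √(2 cos(θ/2))` lies in the open first quadrant and satisfies
`Re z² = 1/2`. On that curve `z² − 1 = −(conj z)² = (i conj z)²`, and `i conj z` has positive
real part `Im z`, so the principal square root is `√(z² − 1) = i conj z`. Then
`z √(z² − 1) = i |z|²` is purely imaginary, and `z + √(z² − 1) = (x + y)(1 + i)` for `z = x + iy`,
whence `Re f(z) = log (√2 (x + y))`. Finally `2 (x + y)² > 2 (x² − y²) = 1` because `x, y > 0`.
-/

section

open Complex ComplexConjugate

variable {z : ℂ}

lemma sq_sub_one_eq_sq_I_mul_conj (hre : (z ^ 2).re = 1 / 2) : z ^ 2 - 1 = (I * conj z) ^ 2 := by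
  simp only [sq, mul_re] at hre
  apply Complex.ext <;> simp [sq] <;> linarith

lemma sq_sub_one_cpow_one_half (hre : (z ^ 2).re = 1 / 2) (him : 0 < z.im) :
    (z ^ 2 - 1) ^ ((1 : ℂ) / 2) = I * conj z := by
  rw [sq_sub_one_eq_sq_I_mul_conj hre, one_div]
  exact sq_cpow_two_inv (by simpa using him)

lemma daviesKuijlaarsF_re_eq_log_norm (hre : (z ^ 2).re = 1 / 2) (him : 0 < z.im) :
    (daviesKuijlaarsF z).re = Real.log ‖z + I * conj z‖ := by
  have hprod_re : (z * (I * conj z)).re = 0 := by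
    rw [mul_left_comm, mul_conj]
    simp
  rw [daviesKuijlaarsF, sq_sub_one_cpow_one_half hre him, sub_re, log_re, hprod_re, sub_zero]

lemma one_lt_norm_add_I_mul_conj (hre : (z ^ 2).re = 1 / 2) (hx : 0 < z.re) (hy : 0 < z.im) :
    1 < ‖z + I * conj z‖ := by
  have hnormSq : normSq (z + I * conj z) = 2 * (z.re + z.im) ^ 2 := by
    simp only [normSq_apply, add_re, mul_re, I_re, conj_re, I_im, conj_im, add_im, mul_im]
    ring
  have hre_sq : z.re ^ 2 - z.im ^ 2 = 1 / 2 := by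
    simpa [sq] using hre
  have hsq : 1 < ‖z + I * conj z‖ ^ 2 := by
    rw [← normSq_eq_norm_sq, hnormSq]
    nlinarith [mul_pos hy (add_pos hx hy)]
  exact one_lt_sq_iff₀ (norm_nonneg _) |>.mp hsq

theorem daviesKuijlaarsF_re_pos (hre : (z ^ 2).re = 1 / 2) (hx : 0 < z.re) (hy : 0 < z.im) :
    0 < (daviesKuijlaarsF z).re := by
  rw [daviesKuijlaarsF_re_eq_log_norm hre hy]
  exact Real.log_pos (one_lt_norm_add_I_mul_conj hre hx hy)

lemma re_sq_exp_mul_I_div_sqrt_two_cos (φ : ℝ) (h : 0 < Real.cos (2 * φ)) :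
    ((exp (φ * I) / (√(2 * Real.cos (2 * φ)) : ℂ)) ^ 2).re = 1 / 2 := by
  rw [div_pow, ← ofReal_pow, Real.sq_sqrt (by positivity), ← Complex.exp_nat_mul, div_ofReal_re]
  have : ((2 : ℕ) : ℂ) * (φ * I) = ((2 * φ : ℝ) : ℂ) * I := by push_cast; ring
  rw [this, exp_ofReal_mul_I_re]
  field_simp

end

/-- For `0 < θ < π`, the Davies–Kuijlaars growth rate
`c(θ) = 2 Re f(e^{iθ/4}/√(2cos(θ/2)))` is strictly positive. -/
theorem davies_kuijlaars_rate_pos (θ : ℝ) (h1 : 0 < θ) (h2 : θ < π) :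
    0 < 2 * (daviesKuijlaarsF
      (Complex.exp (Complex.I * (θ / 4)) / (Real.sqrt (2 * Real.cos (θ / 2)) : ℂ))).re := by
  have hcos : 0 < Real.cos (2 * (θ / 4)) := Real.cos_pos_of_mem_Ioo ⟨by linarith, by linarith⟩
  have hs : 0 < √(2 * Real.cos (2 * (θ / 4))) := by positivity
  have hI : Complex.I * (θ / 4 : ℂ) = ((θ / 4 : ℝ) : ℂ) * Complex.I := by push_cast; ring
  rw [hI, show θ / 2 = 2 * (θ / 4) by ring]
  refine mul_pos two_pos (daviesKuijlaarsF_re_pos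
    (re_sq_exp_mul_I_div_sqrt_two_cos _ hcos) ?_ ?_)
  · rw [Complex.div_ofReal_re, Complex.exp_ofReal_mul_I_re]
    exact div_pos (Real.cos_pos_of_mem_Ioo ⟨by linarith, by linarith⟩) hs
  · rw [Complex.div_ofReal_im, Complex.exp_ofReal_mul_I_im]
    exact div_pos (Real.sin_pos_of_pos_of_lt_pi (by linarith) (by linarith)) hs
end

section
/- Let A ∈ B(H) and ξ ∉ σ(A) with ‖(A − ξ)^{-1}‖ > 1/ε. Then there exists B ∈ B(H) with ‖B‖ ≤ 1 such that ξ ∈ σ(A + εB). Conversely, if ξ ∈ σ(A + εB) for some ‖B‖ ≤ 1 and ξ ∉ σ(A), then ‖(A − ξ)^{-1}‖ ≥ 1/ε. -/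
/-!
Write `R = (ξ - A)⁻¹`. If `‖R‖ ‖E‖ < 1`, then `ξ - (A + E) = (ξ - A)(1 - R E)` is invertible by
the Neumann series, which gives the second implication. For the first, if `‖R‖ > 1/ε`, pick `x`
with `‖x‖ < 1` and `‖R x‖ > 1/ε`, and put `y = R x`. A Hahn–Banach functional norming `y` yields
a rank-one operator `C` with `C y = x` and `‖C‖ ≤ ‖x‖ / ‖y‖ < ε`, and then `y ≠ 0` lies in the
kernel of `ξ - (A + C)`.
-/

theorem spectrum.notMem_add_of_norm_resolvent_mul_lt {R A : Type*} [CommSemiring R] [NormedRing A]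
    [Algebra R A] [HasSummableGeomSeries A] {a b : A} {ξ : R} (hξ : ξ ∉ spectrum R a)
    (h : ‖resolvent a ξ‖ * ‖b‖ < 1) : ξ ∉ spectrum R (a + b) := by
  have hunit := spectrum.notMem_iff.mp hξ
  have hfactor : algebraMap R A ξ - (a + b) =
      (algebraMap R A ξ - a) * (1 - resolvent a ξ * b) := by
    rw [mul_sub, mul_one, ← mul_assoc, resolvent, Ring.mul_inverse_cancel _ hunit, one_mul,
      sub_add_eq_sub_sub]
  rw [spectrum.notMem_iff, hfactor]
  exact hunit.mul (isUnit_one_sub_of_norm_lt_one ((norm_mul_le _ _).trans_lt h))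

namespace ContinuousLinearMap

variable {𝕜 E : Type*} [RCLike 𝕜] [NormedAddCommGroup E] [NormedSpace 𝕜 E]

theorem exists_apply_eq_norm_le_div {F : Type*} [SeminormedAddCommGroup F] [NormedSpace 𝕜 F]
    {y : E} (hy : y ≠ 0) (x : F) : ∃ C : E →L[𝕜] F, C y = x ∧ ‖C‖ ≤ ‖x‖ / ‖y‖ := by
  obtain ⟨g, hg, hgy⟩ := exists_dual_vector'' 𝕜 y
  refine ⟨(‖y‖⁻¹ : 𝕜) • g.smulRight x, ?_, ?_⟩
  · have hy' : (‖y‖ : 𝕜) ≠ 0 := by exact_mod_cast norm_ne_zero_iff.mpr hy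
    simp [hgy, smul_smul, hy']
  · rw [norm_smul, norm_smulRight_apply, norm_inv, RCLike.norm_ofReal, abs_norm, div_eq_inv_mul]
    gcongr
    exact mul_le_of_le_one_left (norm_nonneg _) hg

theorem not_isUnit_of_apply_eq_zero {T : E →L[𝕜] E} {y : E} (hy : y ≠ 0) (h : T y = 0) :
    ¬IsUnit T := by
  rintro ⟨u, rfl⟩
  have hinv := congr($(u.inv_mul) y)
  rw [mul_apply_eq_comp, h, map_zero, one_apply_eq_self] at hinv
  exact hy hinv.symm

theorem exists_mem_spectrum_add_of_lt_norm_resolvent {A : E →L[𝕜] E} {ξ : 𝕜}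
    (hξ : ξ ∉ spectrum 𝕜 A) {r : ℝ} (hr₀ : 0 < r) (hr : r < ‖resolvent A ξ‖) :
    ∃ C : E →L[𝕜] E, ‖C‖ < r⁻¹ ∧ ξ ∈ spectrum 𝕜 (A + C) := by
  obtain ⟨x, hx, hrx⟩ := (resolvent A ξ).exists_lt_apply_of_lt_opNorm hr
  set y := resolvent A ξ x
  have hy : y ≠ 0 := norm_pos_iff.mp (hr₀.trans hrx)
  have hAy : (algebraMap 𝕜 _ ξ - A) y = x := by
    rw [← mul_apply_eq_comp, resolvent, Ring.mul_inverse_cancel _ (spectrum.notMem_iff.mp hξ),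
      one_apply_eq_self]
  obtain ⟨C, hCy, hC⟩ := exists_apply_eq_norm_le_div (𝕜 := 𝕜) hy x
  refine ⟨C, ?_, ?_⟩
  · calc ‖C‖ ≤ ‖x‖ / ‖y‖ := hC
      _ < 1 / r := div_lt_div₀ hx hrx.le zero_le_one hr₀
      _ = r⁻¹ := one_div r
  · refine spectrum.mem_iff.mpr (not_isUnit_of_apply_eq_zero hy ?_)
    rw [← sub_sub, sub_apply, hAy, hCy, sub_self]

end ContinuousLinearMap

/-- Weak Roch–Silbermann theorem: for `ξ ∉ σ(A)`, one has
`‖(A − ξ)⁻¹‖ > 1/ε` iff (up to the boundary case) `ξ ∈ σ(A + εB)` for some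
`‖B‖ ≤ 1`. -/
theorem roch_silbermann {H : Type*} [NormedAddCommGroup H]
    [InnerProductSpace ℂ H] [CompleteSpace H]
    (A : H →L[ℂ] H) (ε : ℝ) (hε : 0 < ε) (ξ : ℂ) (hξ : ξ ∉ spectrum ℂ A) :
    (1 / ε < ‖resolvent A ξ‖ →
      ∃ B : H →L[ℂ] H, ‖B‖ ≤ 1 ∧ ξ ∈ spectrum ℂ (A + (ε : ℂ) • B)) ∧
    ((∃ B : H →L[ℂ] H, ‖B‖ ≤ 1 ∧ ξ ∈ spectrum ℂ (A + (ε : ℂ) • B)) →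
      1 / ε ≤ ‖resolvent A ξ‖) := by
  constructor
  · intro hlt
    obtain ⟨C, hC, hmem⟩ :=
      ContinuousLinearMap.exists_mem_spectrum_add_of_lt_norm_resolvent hξ (by positivity) hlt
    have hεC : (ε : ℂ) ≠ 0 := by exact_mod_cast hε.ne'
    refine ⟨(ε : ℂ)⁻¹ • C, ?_, by rwa [smul_inv_smul₀ hεC]⟩
    rw [norm_smul, norm_inv, Complex.norm_real, Real.norm_of_nonneg hε.le]
    rw [one_div, inv_inv] at hC
    exact inv_mul_le_one_of_le₀ hC.le hε.le
  · rintro ⟨B, hB, hmem⟩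
    by_contra! hlt
    have hεB : ‖(ε : ℂ) • B‖ ≤ ε := by
      rw [norm_smul, Complex.norm_real, Real.norm_of_nonneg hε.le]
      exact mul_le_of_le_one_right hε.le hB
    refine spectrum.notMem_add_of_norm_resolvent_mul_lt hξ ?_ hmem
    calc ‖resolvent A ξ‖ * ‖(ε : ℂ) • B‖ ≤ ‖resolvent A ξ‖ * ε := by gcongr
      _ < 1 / ε * ε := by gcongr
      _ = 1 := one_div_mul_cancel hε.ne'
end
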